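/- Dynamic Laplacian identity in 1D: for a smooth diffeomorphism Φ of [0,1], the operator (Δ_g + Δ_{Φ*g}) f coincides with the Laplace–Beltrami operator Δ_ḡ f of the harmonic mean metric ḡ with coefficient (1+Φ'⁻²)⁻¹, i.e. ḡ = (g⁻¹ + (Φ*g)⁻¹)⁻¹, for all smooth f: [0,1] → ℝ. -/

import Mathlib

open scoped ContDiff


/-- dynamic Laplacian identity in 1D:
`(Δ_g + Δ_{Φ*g}) f = Δ_ḡ f`, where `ḡ` is the harmonic mean metric with
coefficient `h = (1 + (Φ')⁻²)⁻¹` and `Δ_h f = h^{-1/2}(h^{-1/2} f')'`. -/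
theorem stmt3 (Φ S f : ℝ → ℝ) (hΦ : ContDiff ℝ (⊤ : ℕ∞) Φ) (hS : ContDiff ℝ (⊤ : ℕ∞) S)
    (hf : ContDiff ℝ (⊤ : ℕ∞) f)
    (hbij : Set.BijOn Φ (Set.Icc 0 1) (Set.Icc 0 1))
    (hinv : ∀ x, S (Φ x) = x) (hΦ' : ∀ x, deriv Φ x ≠ 0) :
    ∀ x, deriv (deriv f) x + deriv (deriv (f ∘ S)) (Φ x)
      = (Real.sqrt ((1 + (deriv Φ x)⁻¹ ^ 2)⁻¹))⁻¹ *
          deriv (fun s => (Real.sqrt ((1 + (deriv Φ s)⁻¹ ^ 2)⁻¹))⁻¹ * deriv f s) x := by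
  intro x
  have hΦ1 : ContDiff ℝ ∞ (deriv Φ) := (contDiff_infty_iff_deriv.mp (hΦ.of_le (by simp))).2
  have hS1 : ContDiff ℝ ∞ (deriv S) := (contDiff_infty_iff_deriv.mp (hS.of_le (by simp))).2
  have hf1 : ContDiff ℝ ∞ (deriv f) := (contDiff_infty_iff_deriv.mp (hf.of_le (by simp))).2
  have HΦ : ∀ y, HasDerivAt Φ (deriv Φ y) y := fun y => (hΦ.differentiable (by simp) y).hasDerivAt
  have HS : ∀ y, HasDerivAt S (deriv S y) y := fun y => (hS.differentiable (by simp) y).hasDerivAt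
  have Hf : ∀ y, HasDerivAt f (deriv f y) y := fun y => (hf.differentiable (by simp) y).hasDerivAt
  have HΦ1 : ∀ y, HasDerivAt (deriv Φ) (deriv (deriv Φ) y) y :=
    fun y => (hΦ1.differentiable (by norm_num) y).hasDerivAt
  have HS1 : ∀ y, HasDerivAt (deriv S) (deriv (deriv S) y) y :=
    fun y => (hS1.differentiable (by norm_num) y).hasDerivAt
  have Hf1 : ∀ y, HasDerivAt (deriv f) (deriv (deriv f) y) y :=
    fun y => (hf1.differentiable (by norm_num) y).hasDerivAt
  -- S'(Φ y) = (Φ' y)⁻¹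
  have key1 : ∀ y, deriv S (Φ y) = (deriv Φ y)⁻¹ := by
    intro y
    have h1 : HasDerivAt (fun z => S (Φ z)) (deriv S (Φ y) * deriv Φ y) y :=
      (HS (Φ y)).comp y (HΦ y)
    have h2 : (fun z => S (Φ z)) = fun z => z := funext hinv
    rw [h2] at h1
    have h3 : deriv S (Φ y) * deriv Φ y = 1 := by
      have h4 := h1.deriv
      simp at h4
      linarith [h4, mul_comm (deriv S (Φ y)) (deriv Φ y)]
    exact eq_inv_of_mul_eq_one_left h3
  -- second derivative of f ∘ S at Φ x
  have comp1 : deriv (f ∘ S) = fun y => deriv f (S y) * deriv S y :=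
    funext fun y => ((Hf (S y)).comp y (HS y)).deriv
  have H2 : HasDerivAt (fun y => deriv f (S y) * deriv S y)
      ((deriv (deriv f) (S (Φ x)) * deriv S (Φ x)) * deriv S (Φ x)
        + deriv f (S (Φ x)) * deriv (deriv S) (Φ x)) (Φ x) :=
    (((Hf1 (S (Φ x))).comp (Φ x) (HS (Φ x)))).mul (HS1 (Φ x))
  have e2 : deriv (deriv (f ∘ S)) (Φ x)
      = (deriv (deriv f) x * (deriv Φ x)⁻¹) * (deriv Φ x)⁻¹
        + deriv f x * deriv (deriv S) (Φ x) := by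
    rw [comp1, H2.deriv, hinv x, key1 x]
  -- second derivative of S in terms of Φ
  have key2 : deriv (deriv S) (Φ x) * deriv Φ x
      = -(deriv (deriv Φ) x) / (deriv Φ x) ^ 2 := by
    have hleft : HasDerivAt (fun y => deriv S (Φ y))
        (deriv (deriv S) (Φ x) * deriv Φ x) x := (HS1 (Φ x)).comp x (HΦ x)
    have hright : HasDerivAt (fun y => (deriv Φ y)⁻¹)
        (-(deriv (deriv Φ) x) / (deriv Φ x) ^ 2) x := (HΦ1 x).inv (hΦ' x)
    rw [show (fun y => deriv S (Φ y)) = fun y => (deriv Φ y)⁻¹ from funext key1] at hleft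
    exact hleft.unique hright
  -- rewrite the sqrt of inverse
  simp only [Real.sqrt_inv, inv_inv]
  -- derivative of the RHS function
  have hBpos : ∀ s : ℝ, (0:ℝ) < 1 + (deriv Φ s)⁻¹ ^ 2 := fun s => by positivity
  have hB : HasDerivAt (fun s => 1 + (deriv Φ s)⁻¹ ^ 2)
      ((2:ℕ) * ((deriv Φ x)⁻¹) ^ 1 *
        (-(deriv (deriv Φ) x) / (deriv Φ x) ^ 2)) x :=
    (((HΦ1 x).inv (hΦ' x)).pow 2).const_add 1
  have hsq : HasDerivAt (fun s => Real.sqrt (1 + (deriv Φ s)⁻¹ ^ 2))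
      (1 / (2 * Real.sqrt (1 + (deriv Φ x)⁻¹ ^ 2)) *
        ((2:ℕ) * ((deriv Φ x)⁻¹) ^ 1 *
          (-(deriv (deriv Φ) x) / (deriv Φ x) ^ 2))) x :=
    (Real.hasDerivAt_sqrt (ne_of_gt (hBpos x))).comp x hB
  have hmul : HasDerivAt (fun s => Real.sqrt (1 + (deriv Φ s)⁻¹ ^ 2) * deriv f s) _ x :=
    hsq.mul (Hf1 x)
  rw [hmul.deriv, e2]
  -- final algebra
  set u := deriv Φ x with hu
  set v := deriv (deriv Φ) x with hv
  set a := deriv f x with ha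
  set b := deriv (deriv f) x with hb
  set s2 := deriv (deriv S) (Φ x) with hs2
  have hw0 : (0:ℝ) < Real.sqrt (1 + u⁻¹ ^ 2) := Real.sqrt_pos.mpr (hBpos x)
  set w := Real.sqrt (1 + u⁻¹ ^ 2) with hwdef
  have hw2 : w * w = 1 + u⁻¹ ^ 2 := Real.mul_self_sqrt (le_of_lt (hBpos x))
  have hune : u ≠ 0 := hΦ' x
  have hwne : w ≠ 0 := ne_of_gt hw0
  field_simp at key2 ⊢
  have hw2' : w ^ 2 * u ^ 2 = u ^ 2 + 1 := by
    have h5 : w ^ 2 * u ^ 2 = (1 + u⁻¹ ^ 2) * u ^ 2 := by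
      rw [← hw2]; ring
    rw [h5]; field_simp
  push_cast
  linear_combination (2*a) * key2 + (-2*u*b) * hw2'
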